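/- Let p_n ∈ [0,1] with n·p_n → ∞ and n·p_n² → 0. Let G be drawn from the random bipartite graph G(n,n,p_n) with parts A_n, B_n of size n, conditioned on the edge (a,b) being present, where a ∈ A_n and b ∈ B_n are fixed vertices, and let κ_n(a,b) be the Ollivier Ricci curvature of the edge (a,b) in G. Then κ_n(a,b) → −2 in probability as n → ∞. -/

import Mathlib

open MeasureTheory Filter SimpleGraph
open scoped ENNReal

/-- 1-Lipschitz with the Lipschitz constraint binding only within connected
components. -/
def LipOn {V : Type*} (G : SimpleGraph V) (f : V → ℝ) : Prop :=
  ∀ u v : V, G.Reachable u v → |f u - f v| ≤ (G.dist u v : ℝ)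

noncomputable def deg {V : Type*} (G : SimpleGraph V) (x : V) : ℕ :=
  (G.neighborSet x).ncard

noncomputable def Ef {V : Type*} (G : SimpleGraph V) (x : V) (f : V → ℝ) : ℝ :=
  (∑ᶠ z ∈ G.neighborSet x, f z) / (deg G x)

noncomputable def kappa {V : Type*} (G : SimpleGraph V) (x y : V) : ℝ :=
  1 - sSup {t : ℝ | ∃ f : V → ℝ, LipOn G f ∧ t = Ef G x f - Ef G y f}

/-- The law of `G(n,n,p)`: independent Bernoulli(`p`) indicators for the `n²`
possible edges. -/
noncomputable def bipMeasure (n : ℕ) (p : ℝ≥0∞) (hp : p ≤ 1) :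
    Measure (Fin n × Fin n → Bool) :=
  Measure.pi fun _ => (PMF.bernoulli p.toNNReal (by simpa using ENNReal.toNNReal_mono ENNReal.one_ne_top hp)).toMeasure

/-- The bipartite graph (on parts of size `n+1`) encoded by `ω`, conditioned on the
edge `(a,b) = (inl 0, inr 0)` being present. -/
def bipGraphCond (n : ℕ) (ω : Fin (n+1) × Fin (n+1) → Bool) :
    SimpleGraph (Fin (n+1) ⊕ Fin (n+1)) :=
  SimpleGraph.fromRel fun u v =>
    ∃ i j, u = Sum.inl i ∧ v = Sum.inr j ∧ (ω (i, j) = true ∨ (i = 0 ∧ j = 0))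

/-- `κ_n(a,b)`: the Ollivier Ricci curvature of the conditioned edge. -/
noncomputable def kappaRand (n : ℕ) (ω : Fin (n+1) × Fin (n+1) → Bool) : ℝ :=
  kappa (bipGraphCond n ω) (Sum.inl 0) (Sum.inr 0)

-- ### auxiliary

lemma lipOn_of_adj {V : Type*} {G : SimpleGraph V} {f : V → ℝ}
    (h : ∀ u v, G.Adj u v → |f u - f v| ≤ 1) : LipOn G f := by
  have key : ∀ (u v : V) (p : G.Walk u v), |f u - f v| ≤ (p.length : ℝ) := by
    intro u v p
    induction p with
    | nil => simp
    | @cons u w v ha q ih =>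
      have := abs_sub_le (f u) (f w) (f v)
      have h2 := add_le_add (h _ _ ha) ih
      rw [SimpleGraph.Walk.length_cons]
      push_cast
      linarith
  intro u v hr
  obtain ⟨p, hp⟩ := hr.exists_walk_length_eq_dist
  simpa [hp] using key u v p

section Det

variable {n : ℕ} (ω : Fin (n+1) × Fin (n+1) → Bool)

lemma adj_lr {i j : Fin (n+1)} :
    (bipGraphCond n ω).Adj (Sum.inl i) (Sum.inr j) ↔ (ω (i, j) = true ∨ (i = 0 ∧ j = 0)) := by
  simp [bipGraphCond, SimpleGraph.fromRel_adj]

lemma not_adj_ll {i j : Fin (n+1)} : ¬ (bipGraphCond n ω).Adj (Sum.inl i) (Sum.inl j) := by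
  simp [bipGraphCond, SimpleGraph.fromRel_adj]

lemma not_adj_rr {i j : Fin (n+1)} : ¬ (bipGraphCond n ω).Adj (Sum.inr i) (Sum.inr j) := by
  simp [bipGraphCond, SimpleGraph.fromRel_adj]

lemma adj_xy : (bipGraphCond n ω).Adj (Sum.inl 0) (Sum.inr 0) := by
  rw [adj_lr]; exact Or.inr ⟨rfl, rfl⟩

end Det

section Det2
variable {n : ℕ} (ω : Fin (n+1) × Fin (n+1) → Bool)

def adjA (i : Fin (n+1)) : Prop :=
  ∃ j : Fin (n+1), j ≠ 0 ∧ ω (0, j) = true ∧ ω (i, j) = true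

noncomputable instance : DecidablePred (adjA ω) := fun _ => Classical.dec _

noncomputable def Xc : ℕ :=
  (Finset.univ.filter (fun j : Fin (n+1) => j ≠ 0 ∧ ω (0, j) = true)).card

noncomputable def Yc : ℕ :=
  (Finset.univ.filter (fun i : Fin (n+1) => i ≠ 0 ∧ ω (i, 0) = true)).card

noncomputable def Bc : ℕ :=
  (Finset.univ.filter (fun i : Fin (n+1) => (i ≠ 0 ∧ ω (i, 0) = true) ∧ adjA ω i)).card

noncomputable def ff : (Fin (n+1) ⊕ Fin (n+1)) → ℝ
  | Sum.inl i => if i = 0 ∨ adjA ω i then 1 else -1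
  | Sum.inr j => if j ≠ 0 ∧ ω (0, j) = true then 2 else 0

noncomputable def JX : Finset (Fin (n+1)) :=
  Finset.univ.filter (fun j : Fin (n+1) => j = 0 ∨ ω (0, j) = true)

noncomputable def JY : Finset (Fin (n+1)) :=
  Finset.univ.filter (fun i : Fin (n+1) => i = 0 ∨ ω (i, 0) = true)

lemma JX_eq : JX ω = insert 0 (Finset.univ.filter (fun j : Fin (n+1) => j ≠ 0 ∧ ω (0, j) = true)) := by
  ext j; by_cases hj : j = 0 <;> simp [JX, hj]

lemma JY_eq : JY ω = insert 0 (Finset.univ.filter (fun i : Fin (n+1) => i ≠ 0 ∧ ω (i, 0) = true)) := by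
  ext i; by_cases hi : i = 0 <;> simp [JY, hi]

lemma card_JX : (JX ω).card = Xc ω + 1 := by
  rw [JX_eq, Finset.card_insert_of_notMem (by simp), Xc]

lemma card_JY : (JY ω).card = Yc ω + 1 := by
  rw [JY_eq, Finset.card_insert_of_notMem (by simp), Yc]

lemma nbhd_x : (bipGraphCond n ω).neighborSet (Sum.inl 0) = ↑((JX ω).image (Sum.inr : Fin (n+1) → Fin (n+1) ⊕ Fin (n+1))) := by
  ext v
  cases v with
  | inl i => simp [SimpleGraph.mem_neighborSet, not_adj_ll]
  | inr j =>
      simp only [SimpleGraph.mem_neighborSet, adj_lr, Finset.coe_image, Set.mem_image,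
        Finset.mem_coe, JX, Finset.mem_filter, Finset.mem_univ, true_and, Sum.inr.injEq]
      constructor
      · intro h
        exact ⟨j, by tauto, rfl⟩
      · rintro ⟨j', hj', rfl⟩
        tauto

lemma nbhd_y : (bipGraphCond n ω).neighborSet (Sum.inr 0) = ↑((JY ω).image (Sum.inl : Fin (n+1) → Fin (n+1) ⊕ Fin (n+1))) := by
  ext v
  cases v with
  | inr i => simp [SimpleGraph.mem_neighborSet, fun i j => (not_adj_rr ω (i := i) (j := j))]
  | inl i =>
      simp only [SimpleGraph.mem_neighborSet, Finset.coe_image, Set.mem_image,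
        Finset.mem_coe, JY, Finset.mem_filter, Finset.mem_univ, true_and]
      rw [SimpleGraph.adj_comm, adj_lr]
      simp only [Sum.inl.injEq]
      constructor
      · intro h
        exact ⟨i, by tauto, rfl⟩
      · rintro ⟨i', hi', rfl⟩
        tauto

lemma deg_x : deg (bipGraphCond n ω) (Sum.inl 0) = Xc ω + 1 := by
  rw [deg, nbhd_x, Set.ncard_coe_finset,
    Finset.card_image_of_injective _ Sum.inr_injective, card_JX]

lemma deg_y : deg (bipGraphCond n ω) (Sum.inr 0) = Yc ω + 1 := by
  rw [deg, nbhd_y, Set.ncard_coe_finset,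
    Finset.card_image_of_injective _ Sum.inl_injective, card_JY]

lemma sum_nbhd_x (g : (Fin (n+1) ⊕ Fin (n+1)) → ℝ) :
    ∑ᶠ z ∈ (bipGraphCond n ω).neighborSet (Sum.inl 0), g z = ∑ j ∈ JX ω, g (Sum.inr j) := by
  rw [nbhd_x, finsum_mem_coe_finset, Finset.sum_image (fun _ _ _ _ h => Sum.inr_injective h)]

lemma sum_nbhd_y (g : (Fin (n+1) ⊕ Fin (n+1)) → ℝ) :
    ∑ᶠ z ∈ (bipGraphCond n ω).neighborSet (Sum.inr 0), g z = ∑ i ∈ JY ω, g (Sum.inl i) := by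
  rw [nbhd_y, finsum_mem_coe_finset, Finset.sum_image (fun _ _ _ _ h => Sum.inl_injective h)]

lemma Ef_x_ff : Ef (bipGraphCond n ω) (Sum.inl 0) (ff ω) = 2 * Xc ω / (Xc ω + 1) := by
  rw [Ef, deg_x, sum_nbhd_x, JX_eq, Finset.sum_insert (by simp)]
  have h0 : ff ω (Sum.inr 0) = 0 := by simp [ff]
  have hval : ∀ j ∈ Finset.univ.filter (fun j : Fin (n+1) => j ≠ 0 ∧ ω (0,j) = true),
      ff ω (Sum.inr j) = 2 := by
    intro j hj
    simp only [Finset.mem_filter, Finset.mem_univ, true_and] at hj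
    simp [ff, hj]
  rw [h0, Finset.sum_congr rfl hval, Finset.sum_const]
  rw [show (Finset.univ.filter (fun j : Fin (n+1) => j ≠ 0 ∧ ω (0,j) = true)).card = Xc ω from rfl]
  push_cast
  ring

lemma Ef_y_ff : Ef (bipGraphCond n ω) (Sum.inr 0) (ff ω)
    = (1 + 2 * Bc ω - Yc ω) / (Yc ω + 1) := by
  rw [Ef, deg_y, sum_nbhd_y, JY_eq, Finset.sum_insert (by simp)]
  have h0 : ff ω (Sum.inl 0) = 1 := by simp [ff]
  have hval : ∀ i ∈ Finset.univ.filter (fun i : Fin (n+1) => i ≠ 0 ∧ ω (i,0) = true),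
      ff ω (Sum.inl i) = if adjA ω i then 1 else -1 := by
    intro i hi
    simp only [Finset.mem_filter, Finset.mem_univ, true_and] at hi
    simp [ff, hi.1]
  rw [h0, Finset.sum_congr rfl hval, Finset.sum_ite, Finset.sum_const, Finset.sum_const]
  set T := Finset.univ.filter (fun i : Fin (n+1) => i ≠ 0 ∧ ω (i,0) = true) with hT
  have hB : (T.filter (adjA ω)).card = Bc ω := by
    rw [hT, Finset.filter_filter]; rfl
  have hadd : (T.filter (adjA ω)).card + (T.filter (fun i => ¬ adjA ω i)).card = Yc ω :=
    Finset.card_filter_add_card_filter_not _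
  have hNB : ((T.filter (fun i => ¬ adjA ω i)).card : ℝ) = (Yc ω : ℝ) - Bc ω := by
    rw [hB] at hadd
    have := congrArg (Nat.cast : ℕ → ℝ) hadd
    push_cast at this
    linarith
  rw [hB]
  simp only [nsmul_eq_mul, smul_eq_mul]
  rw [hNB]
  push_cast
  ring

end Det2

section Det3
variable {n : ℕ} (ω : Fin (n+1) × Fin (n+1) → Bool)

lemma ff_edge {i j : Fin (n+1)} (h : (bipGraphCond n ω).Adj (Sum.inl i) (Sum.inr j)) :
    |ff ω (Sum.inl i) - ff ω (Sum.inr j)| ≤ 1 := by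
  rw [adj_lr] at h
  by_cases hj : j ≠ 0 ∧ ω (0, j) = true
  · have h2 : ff ω (Sum.inr j) = 2 := by simp [ff, hj]
    have h1 : ff ω (Sum.inl i) = 1 := by
      rcases eq_or_ne i 0 with hi | hi
      · simp [ff, hi]
      · have hij : ω (i, j) = true := by tauto
        have : adjA ω i := ⟨j, hj.1, hj.2, hij⟩
        simp [ff, this]
    rw [h1, h2]; norm_num
  · have h2 : ff ω (Sum.inr j) = 0 := by simp [ff, hj]
    rw [h2]
    by_cases hi : i = 0 ∨ adjA ω i
    · simp [ff, hi]
    · simp [ff, hi]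

lemma ff_lip : LipOn (bipGraphCond n ω) (ff ω) := by
  apply lipOn_of_adj
  intro u v huv
  cases u with
  | inl i =>
    cases v with
    | inl i' => exact absurd huv (not_adj_ll ω)
    | inr j => exact ff_edge ω huv
  | inr j =>
    cases v with
    | inl i => rw [abs_sub_comm]; exact ff_edge ω huv.symm
    | inr j' => exact absurd huv (not_adj_rr ω)

lemma Ef_le_of_forall {V : Type*} [Finite V] {G : SimpleGraph V} {x : V} {g : V → ℝ} {c : ℝ}
    (h : ∀ z ∈ G.neighborSet x, g z ≤ c) (hd : 0 < deg G x) : Ef G x g ≤ c := by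
  have hfin : (G.neighborSet x).Finite := Set.toFinite _
  rw [Ef, deg, Set.ncard_eq_toFinset_card _ hfin, finsum_mem_eq_finite_toFinset_sum _ hfin]
  have hd' : (0:ℝ) < hfin.toFinset.card := by
    rw [deg, Set.ncard_eq_toFinset_card _ hfin] at hd
    exact_mod_cast hd
  rw [div_le_iff₀ hd']
  calc ∑ z ∈ hfin.toFinset, g z ≤ hfin.toFinset.card • c :=
        Finset.sum_le_card_nsmul _ _ _ (fun z hz => h z (hfin.mem_toFinset.mp hz))
    _ = c * hfin.toFinset.card := by rw [nsmul_eq_mul, mul_comm]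

lemma Ef_ge_of_forall {V : Type*} [Finite V] {G : SimpleGraph V} {x : V} {g : V → ℝ} {c : ℝ}
    (h : ∀ z ∈ G.neighborSet x, c ≤ g z) (hd : 0 < deg G x) : c ≤ Ef G x g := by
  have hfin : (G.neighborSet x).Finite := Set.toFinite _
  rw [Ef, deg, Set.ncard_eq_toFinset_card _ hfin, finsum_mem_eq_finite_toFinset_sum _ hfin]
  have hd' : (0:ℝ) < hfin.toFinset.card := by
    rw [deg, Set.ncard_eq_toFinset_card _ hfin] at hd
    exact_mod_cast hd
  rw [le_div_iff₀ hd']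
  calc c * hfin.toFinset.card = hfin.toFinset.card • c := by rw [nsmul_eq_mul, mul_comm]
    _ ≤ ∑ z ∈ hfin.toFinset, g z :=
        Finset.card_nsmul_le_sum _ _ _ (fun z hz => h z (hfin.mem_toFinset.mp hz))

lemma deg_x_pos : 0 < deg (bipGraphCond n ω) (Sum.inl 0) := by
  rw [deg_x]; omega

lemma deg_y_pos : 0 < deg (bipGraphCond n ω) (Sum.inr 0) := by
  rw [deg_y]; omega

lemma sub_le_three (g : (Fin (n+1) ⊕ Fin (n+1)) → ℝ) (hg : LipOn (bipGraphCond n ω) g) :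
    Ef (bipGraphCond n ω) (Sum.inl 0) g - Ef (bipGraphCond n ω) (Sum.inr 0) g ≤ 3 := by
  set G := bipGraphCond n ω with hG
  set x : Fin (n+1) ⊕ Fin (n+1) := Sum.inl 0
  set y : Fin (n+1) ⊕ Fin (n+1) := Sum.inr 0
  have hxy : G.Adj x y := adj_xy ω
  have h1 : Ef G x g ≤ g y + 2 := by
    apply Ef_le_of_forall _ (deg_x_pos ω)
    intro z hz
    have hxz : G.Adj x z := hz
    have hr : G.Reachable z y :=
      ⟨SimpleGraph.Walk.cons hxz.symm (SimpleGraph.Walk.cons hxy SimpleGraph.Walk.nil)⟩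
    have hd : G.dist z y ≤ 2 := by
      simpa using SimpleGraph.dist_le
        (SimpleGraph.Walk.cons hxz.symm (SimpleGraph.Walk.cons hxy SimpleGraph.Walk.nil))
    have := hg z y hr
    have h2 : (G.dist z y : ℝ) ≤ 2 := by exact_mod_cast hd
    have := abs_le.mp (this.trans h2)
    linarith [this.2]
  have h2 : g y - 1 ≤ Ef G y g := by
    apply Ef_ge_of_forall _ (deg_y_pos ω)
    intro z hz
    have hyz : G.Adj y z := hz
    have hr : G.Reachable z y := ⟨SimpleGraph.Walk.cons hyz.symm SimpleGraph.Walk.nil⟩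
    have hd : G.dist z y ≤ 1 := by
      simpa using SimpleGraph.dist_le (SimpleGraph.Walk.cons hyz.symm SimpleGraph.Walk.nil)
    have := hg z y hr
    have h2' : (G.dist z y : ℝ) ≤ 1 := by exact_mod_cast hd
    have := abs_le.mp (this.trans h2')
    linarith [this.1]
  linarith

lemma kappa_bound :
    |kappaRand n ω + 2| ≤ 2 / (Xc ω + 1) + (2 + 2 * Bc ω) / (Yc ω + 1) := by
  set G := bipGraphCond n ω with hG
  set x : Fin (n+1) ⊕ Fin (n+1) := Sum.inl 0
  set y : Fin (n+1) ⊕ Fin (n+1) := Sum.inr 0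
  set S : Set ℝ := {t : ℝ | ∃ f, LipOn G f ∧ t = Ef G x f - Ef G y f} with hS
  set D : ℝ := Ef G x (ff ω) - Ef G y (ff ω) with hD
  have hD_mem : D ∈ S := ⟨ff ω, ff_lip ω, rfl⟩
  have hub : ∀ t ∈ S, t ≤ 3 := by
    rintro t ⟨g, hg, rfl⟩
    exact sub_le_three ω g hg
  have hsup_le : sSup S ≤ 3 := csSup_le ⟨D, hD_mem⟩ hub
  have hD_le : D ≤ sSup S := le_csSup ⟨3, fun t ht => hub t ht⟩ hD_mem
  have hk : kappaRand n ω + 2 = 3 - sSup S := by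
    rw [kappaRand, kappa]; ring
  have hXpos : (0:ℝ) < (Xc ω : ℝ) + 1 := by positivity
  have hYpos : (0:ℝ) < (Yc ω : ℝ) + 1 := by positivity
  have hDval : 3 - D = 2 / (Xc ω + 1) + (2 + 2 * Bc ω) / (Yc ω + 1) := by
    rw [hD, Ef_x_ff, Ef_y_ff]
    field_simp
    ring
  rw [hk, abs_of_nonneg (by linarith)]
  linarith

end Det3

section Prob
variable {N : ℕ} {q : ℝ≥0∞} {hq : q ≤ 1}

lemma meas_all (s : Set (Fin N × Fin N → Bool)) : MeasurableSet s :=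
  s.to_countable.measurableSet

lemma meas_fn {β : Type*} [MeasurableSpace β] (f : (Fin N × Fin N → Bool) → β) : Measurable f :=
  measurable_of_countable f

instance : IsProbabilityMeasure (bipMeasure N q hq) := by
  rw [bipMeasure]; infer_instance

lemma cyl_measure (s : Finset (Fin N × Fin N)) :
    bipMeasure N q hq {ω | ∀ c ∈ s, ω c = true} = q ^ s.card := by
  classical
  have hset : {ω : Fin N × Fin N → Bool | ∀ c ∈ s, ω c = true}
      = Set.pi Set.univ (fun c => if c ∈ s then {true} else Set.univ) := by
    ext ω
    simp only [Set.mem_setOf_eq, Set.mem_pi, Set.mem_univ, true_implies]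
    constructor
    · intro h c
      by_cases hc : c ∈ s
      · simp [hc, h c hc]
      · simp [hc]
    · intro h c hc
      have := h c
      simpa [hc] using this
  rw [bipMeasure, hset, MeasureTheory.Measure.pi_pi]
  have hone : ∀ c : Fin N × Fin N,
      ((PMF.bernoulli q.toNNReal (by simpa using ENNReal.toNNReal_mono ENNReal.one_ne_top hq)).toMeasure (if c ∈ s then ({true} : Set Bool) else Set.univ))
        = if c ∈ s then q else 1 := by
    intro c
    by_cases hc : c ∈ s
    · simp only [hc, if_true]
      rw [PMF.toMeasure_apply_singleton _ _ (measurableSet_singleton _)]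
      simp [PMF.bernoulli, ENNReal.coe_toNNReal (ne_top_of_le_ne_top ENNReal.one_ne_top hq)]
    · simp only [hc, if_false]
      have := measure_univ (μ := (PMF.bernoulli q.toNNReal (by simpa using ENNReal.toNNReal_mono ENNReal.one_ne_top hq)).toMeasure)
      simpa using this
  rw [Finset.prod_congr rfl (fun c _ => hone c), Finset.prod_ite_mem, Finset.univ_inter,
    Finset.prod_const]

end Prob

section Prob2
variable {N : ℕ} {r : ℝ}

lemma measure_single (hr1 : r ≤ 1) (c : Fin N × Fin N) :
    bipMeasure N (ENNReal.ofReal r) (ENNReal.ofReal_le_one.mpr hr1) {ω | ω c = true}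
      = ENNReal.ofReal r := by
  have h := cyl_measure (q := ENNReal.ofReal r) (hq := ENNReal.ofReal_le_one.mpr hr1) ({c} : Finset (Fin N × Fin N))
  simpa using h

lemma measure_pair (hr1 : r ≤ 1) {c c' : Fin N × Fin N} (hcc : c ≠ c') :
    bipMeasure N (ENNReal.ofReal r) (ENNReal.ofReal_le_one.mpr hr1) {ω | ω c = true ∧ ω c' = true}
      = (ENNReal.ofReal r) ^ 2 := by
  have h := cyl_measure (q := ENNReal.ofReal r) (hq := ENNReal.ofReal_le_one.mpr hr1)
    ({c, c'} : Finset (Fin N × Fin N))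
  rw [Finset.card_insert_of_notMem (by simp [hcc]), Finset.card_singleton] at h
  rw [← h]
  congr 1
  ext ω
  simp [Set.mem_setOf_eq]

lemma integral_ind (hr0 : 0 ≤ r) (hr1 : r ≤ 1) (c : Fin N × Fin N) :
    ∫ ω, (if ω c = true then (1:ℝ) else 0)
      ∂(bipMeasure N (ENNReal.ofReal r) (ENNReal.ofReal_le_one.mpr hr1)) = r := by
  have hfun : (fun ω : Fin N × Fin N → Bool => if ω c = true then (1:ℝ) else 0)
      = Set.indicator {ω | ω c = true} (fun _ => (1:ℝ)) := by
    funext ω; by_cases h : ω c = true <;> simp [h, Set.indicator_apply]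
  rw [hfun, integral_indicator_const _ (meas_all _), measureReal_def, measure_single hr1]
  simp [ENNReal.toReal_ofReal hr0]

lemma integral_indPair (hr0 : 0 ≤ r) (hr1 : r ≤ 1) {c c' : Fin N × Fin N} (hcc : c ≠ c') :
    ∫ ω, (if ω c = true then (1:ℝ) else 0) * (if ω c' = true then (1:ℝ) else 0)
      ∂(bipMeasure N (ENNReal.ofReal r) (ENNReal.ofReal_le_one.mpr hr1)) = r ^ 2 := by
  have hfun : (fun ω : Fin N × Fin N → Bool =>
      (if ω c = true then (1:ℝ) else 0) * (if ω c' = true then (1:ℝ) else 0))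
      = Set.indicator {ω | ω c = true ∧ ω c' = true} (fun _ => (1:ℝ)) := by
    funext ω
    by_cases h : ω c = true <;> by_cases h' : ω c' = true <;>
      simp [h, h', Set.indicator_apply]
  rw [hfun, integral_indicator_const _ (meas_all _), measureReal_def, measure_pair hr1 hcc]
  rw [← ENNReal.ofReal_pow hr0]
  simp [ENNReal.toReal_ofReal (pow_nonneg hr0 2)]

lemma cheb (hr0 : 0 ≤ r) (hr1 : r ≤ 1) (F : Finset (Fin N)) (e : Fin N → Fin N × Fin N)
    (he : Function.Injective e) (ha : 0 < (F.card : ℝ) * r) :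
    bipMeasure N (ENNReal.ofReal r) (ENNReal.ofReal_le_one.mpr hr1)
        {ω | ((F.filter (fun j => ω (e j) = true)).card : ℝ) ≤ (F.card : ℝ) * r / 2}
      ≤ ENNReal.ofReal ((F.card : ℝ) * r) / ENNReal.ofReal (((F.card : ℝ) * r / 2) ^ 2) := by
  set μ := bipMeasure N (ENNReal.ofReal r) (ENNReal.ofReal_le_one.mpr hr1) with hμ
  set a : ℝ := (F.card : ℝ) * r with haa
  set X : (Fin N × Fin N → Bool) → ℝ :=
    fun ω => ∑ j ∈ F, (if ω (e j) = true then (1:ℝ) else 0) with hX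
  have hXeq : ∀ ω, ((F.filter (fun j => ω (e j) = true)).card : ℝ) = X ω := by
    intro ω
    rw [hX, Finset.card_filter]
    push_cast
    rfl
  have hEX : ∫ ω, X ω ∂μ = a := by
    rw [hX]
    simp only []
    rw [integral_finset_sum _ (fun j _ => Integrable.of_finite)]
    rw [Finset.sum_congr rfl (fun j _ => integral_ind hr0 hr1 (e j)), Finset.sum_const,
      nsmul_eq_mul]
  have hcard1 : 1 ≤ F.card := by
    by_contra hF
    push_neg at hF
    interval_cases hF' : F.card <;> simp_all
  have hEX2 : ∫ ω, X ω * X ω ∂μ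
      = (F.card : ℝ) * r + (F.card : ℝ) * ((F.card : ℝ) - 1) * r ^ 2 := by
    have hexp : ∀ ω, X ω * X ω = ∑ j ∈ F, ∑ k ∈ F,
        (if ω (e j) = true then (1:ℝ) else 0) * (if ω (e k) = true then (1:ℝ) else 0) := by
      intro ω; rw [hX]; rw [Finset.sum_mul_sum]
    rw [integral_congr_ae (ae_of_all _ hexp)]
    rw [integral_finset_sum _ (fun j _ => Integrable.of_finite)]
    have hinner : ∀ j ∈ F, ∫ ω, (∑ k ∈ F,
        (if ω (e j) = true then (1:ℝ) else 0) * (if ω (e k) = true then (1:ℝ) else 0)) ∂μ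
        = r + ((F.card : ℝ) - 1) * r ^ 2 := by
      intro j hj
      rw [integral_finset_sum _ (fun k _ => Integrable.of_finite)]
      rw [← Finset.add_sum_erase _ _ hj]
      have hjj : ∫ ω, (if ω (e j) = true then (1:ℝ) else 0) * (if ω (e j) = true then (1:ℝ) else 0) ∂μ = r := by
        have : ∀ ω : Fin N × Fin N → Bool,
            (if ω (e j) = true then (1:ℝ) else 0) * (if ω (e j) = true then (1:ℝ) else 0)
            = (if ω (e j) = true then (1:ℝ) else 0) := by
          intro ω; by_cases h : ω (e j) = true <;> simp [h]
        rw [integral_congr_ae (ae_of_all _ this), integral_ind hr0 hr1]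
      have hjk : ∀ k ∈ F.erase j,
          ∫ ω, (if ω (e j) = true then (1:ℝ) else 0) * (if ω (e k) = true then (1:ℝ) else 0) ∂μ
          = r ^ 2 := by
        intro k hk
        have hkj : e j ≠ e k := fun h => (Finset.mem_erase.mp hk).1 (he h).symm
        exact integral_indPair hr0 hr1 hkj
      rw [hjj, Finset.sum_congr rfl hjk, Finset.sum_const, nsmul_eq_mul,
        Finset.card_erase_of_mem hj, Nat.cast_sub hcard1]
      push_cast
      ring
    rw [Finset.sum_congr rfl hinner, Finset.sum_const, nsmul_eq_mul]
    ring
  have hVar : ∫ ω, (X ω - a) ^ 2 ∂μ ≤ a := by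
    have hexp : ∀ ω, (X ω - a) ^ 2 = X ω * X ω - 2 * a * X ω + a ^ 2 := by
      intro ω; ring
    rw [integral_congr_ae (ae_of_all _ hexp)]
    rw [integral_add (by exact (Integrable.of_finite).sub (Integrable.of_finite))
      (integrable_const _), integral_sub Integrable.of_finite Integrable.of_finite,
      integral_const, integral_const_mul, hEX, hEX2]
    simp only [measure_univ, probReal_univ, ENNReal.toReal_one, smul_eq_mul, one_mul]
    have hr2 : 0 ≤ (F.card : ℝ) * r ^ 2 := by positivity
    have : 0 ≤ (F.card : ℝ) := by positivity
    nlinarith [sq_nonneg r]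
  have hsub : {ω | ((F.filter (fun j => ω (e j) = true)).card : ℝ) ≤ a / 2}
      ⊆ {ω | ENNReal.ofReal ((a / 2) ^ 2) ≤ ENNReal.ofReal ((X ω - a) ^ 2)} := by
    intro ω hω
    simp only [Set.mem_setOf_eq] at hω ⊢
    apply ENNReal.ofReal_le_ofReal
    rw [hXeq] at hω
    nlinarith
  calc μ {ω | ((F.filter (fun j => ω (e j) = true)).card : ℝ) ≤ (F.card : ℝ) * r / 2}
      ≤ μ {ω | ENNReal.ofReal ((a / 2) ^ 2) ≤ ENNReal.ofReal ((X ω - a) ^ 2)} :=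
        measure_mono hsub
    _ ≤ (∫⁻ ω, ENNReal.ofReal ((X ω - a) ^ 2) ∂μ) / ENNReal.ofReal ((a / 2) ^ 2) := by
        apply meas_ge_le_lintegral_div (meas_fn _).aemeasurable
        · exact (ENNReal.ofReal_pos.mpr (by positivity)).ne'
        · exact ENNReal.ofReal_ne_top
    _ ≤ ENNReal.ofReal a / ENNReal.ofReal ((a / 2) ^ 2) := by
        apply ENNReal.div_le_div_right
        rw [← ofReal_integral_eq_lintegral_ofReal Integrable.of_finite
          (ae_of_all _ (fun ω => sq_nonneg _))]
        exact ENNReal.ofReal_le_ofReal hVar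

end Prob2


section Bad
variable {n : ℕ} {r : ℝ}

lemma bad_pred_measure (hr0 : 0 ≤ r) (hr1 : r ≤ 1) (i : Fin (n+1)) :
    bipMeasure (n+1) (ENNReal.ofReal r) (ENNReal.ofReal_le_one.mpr hr1)
        {ω | (i ≠ 0 ∧ ω (i, 0) = true) ∧ adjA ω i}
      ≤ (n : ℝ≥0∞) * (ENNReal.ofReal r) ^ 3 := by
  set μ := bipMeasure (n+1) (ENNReal.ofReal r) (ENNReal.ofReal_le_one.mpr hr1) with hμ
  rcases eq_or_ne i 0 with rfl | hi
  · have : {ω : Fin (n+1) × Fin (n+1) → Bool | ((0:Fin (n+1)) ≠ 0 ∧ ω (0, 0) = true) ∧ adjA ω 0} = ∅ := by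
      ext ω; simp
    rw [this]
    simp
  · have hsub : {ω : Fin (n+1) × Fin (n+1) → Bool | (i ≠ 0 ∧ ω (i, 0) = true) ∧ adjA ω i}
        ⊆ ⋃ j ∈ Finset.univ.filter (fun j : Fin (n+1) => j ≠ 0),
            {ω | ∀ c ∈ ({(i, 0), (0, j), (i, j)} : Finset (Fin (n+1) × Fin (n+1))), ω c = true} := by
      rintro ω ⟨⟨-, h0⟩, j, hj, h1, h2⟩
      refine Set.mem_iUnion₂.mpr ⟨j, by simp [hj], ?_⟩
      intro c hc
      simp only [Finset.mem_insert, Finset.mem_singleton] at hc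
      rcases hc with rfl | rfl | rfl <;> assumption
    calc μ _ ≤ ∑ j ∈ Finset.univ.filter (fun j : Fin (n+1) => j ≠ 0),
          μ {ω | ∀ c ∈ ({(i, 0), (0, j), (i, j)} : Finset (Fin (n+1) × Fin (n+1))), ω c = true} :=
            (measure_mono hsub).trans (measure_biUnion_finset_le _ _)
      _ ≤ (n : ℝ≥0∞) * (ENNReal.ofReal r) ^ 3 := by
          have hcyl : ∀ j ∈ Finset.univ.filter (fun j : Fin (n+1) => j ≠ 0),
              μ {ω | ∀ c ∈ ({(i, 0), (0, j), (i, j)} : Finset (Fin (n+1) × Fin (n+1))), ω c = true}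
                = (ENNReal.ofReal r) ^ 3 := by
            intro j hj
            simp only [Finset.mem_filter, Finset.mem_univ, true_and] at hj
            rw [hμ, cyl_measure]
            congr 1
            rw [Finset.card_insert_of_notMem
                (by simp [hi, hj, Ne.symm hi, Ne.symm hj, Prod.ext_iff]),
              Finset.card_insert_of_notMem
                (by simp [hi, hj, Ne.symm hi, Ne.symm hj, Prod.ext_iff]),
              Finset.card_singleton]
          rw [Finset.sum_congr rfl hcyl, Finset.sum_const, nsmul_eq_mul]
          gcongr
          have : (Finset.univ.filter (fun j : Fin (n+1) => j ≠ 0)) = Finset.univ.erase 0 := by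
            ext j; simp [Finset.mem_erase]
          rw [this, Finset.card_erase_of_mem (Finset.mem_univ _)]
          simp

lemma bad_measure (hr0 : 0 ≤ r) (hr1 : r ≤ 1) {t : ℝ} (ht : 0 < t) :
    bipMeasure (n+1) (ENNReal.ofReal r) (ENNReal.ofReal_le_one.mpr hr1)
        {ω | t ≤ (Bc ω : ℝ)}
      ≤ (((n:ℝ≥0∞) + 1) * (n : ℝ≥0∞) * (ENNReal.ofReal r) ^ 3) / ENNReal.ofReal t := by
  set μ := bipMeasure (n+1) (ENNReal.ofReal r) (ENNReal.ofReal_le_one.mpr hr1) with hμ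
  have hlin : ∫⁻ ω, ((Bc ω : ℕ) : ℝ≥0∞) ∂μ ≤ ((n:ℝ≥0∞) + 1) * (n : ℝ≥0∞) * (ENNReal.ofReal r) ^ 3 := by
    have hBc : ∀ ω : Fin (n+1) × Fin (n+1) → Bool, ((Bc ω : ℕ) : ℝ≥0∞)
        = ∑ i ∈ Finset.univ, (if (i ≠ 0 ∧ ω (i, 0) = true) ∧ adjA ω i then (1:ℝ≥0∞) else 0) := by
      intro ω
      rw [Bc, Finset.card_filter]
      push_cast
      rfl
    rw [lintegral_congr hBc, lintegral_finset_sum _ (fun i _ => meas_fn _)]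
    have hterm : ∀ i ∈ Finset.univ, (∫⁻ ω, (if (i ≠ 0 ∧ ω (i, 0) = true) ∧ adjA ω i then (1:ℝ≥0∞) else 0) ∂μ)
        ≤ (n : ℝ≥0∞) * (ENNReal.ofReal r) ^ 3 := by
      intro i _
      have hind : (fun ω : Fin (n+1) × Fin (n+1) → Bool =>
          (if (i ≠ 0 ∧ ω (i, 0) = true) ∧ adjA ω i then (1:ℝ≥0∞) else 0))
          = Set.indicator {ω | (i ≠ 0 ∧ ω (i, 0) = true) ∧ adjA ω i} (fun _ => (1:ℝ≥0∞)) := by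
        funext ω
        by_cases h : (i ≠ 0 ∧ ω (i, 0) = true) ∧ adjA ω i <;> simp [h, Set.indicator_apply]
      rw [hind, lintegral_indicator_const (meas_all _), one_mul]
      exact bad_pred_measure hr0 hr1 i
    calc ∑ i ∈ Finset.univ, ∫⁻ ω, (if (i ≠ 0 ∧ ω (i, 0) = true) ∧ adjA ω i then (1:ℝ≥0∞) else 0) ∂μ
        ≤ ∑ _i ∈ (Finset.univ : Finset (Fin (n+1))), (n : ℝ≥0∞) * (ENNReal.ofReal r) ^ 3 :=
          Finset.sum_le_sum hterm
      _ = ((n:ℝ≥0∞) + 1) * (n : ℝ≥0∞) * (ENNReal.ofReal r) ^ 3 := by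
          rw [Finset.sum_const, nsmul_eq_mul]
          simp [Finset.card_univ]
          ring
  have hsub : {ω : Fin (n+1) × Fin (n+1) → Bool | t ≤ (Bc ω : ℝ)}
      ⊆ {ω | ENNReal.ofReal t ≤ ((Bc ω : ℕ) : ℝ≥0∞)} := by
    intro ω hω
    simp only [Set.mem_setOf_eq] at hω ⊢
    rw [← ENNReal.ofReal_natCast]
    exact ENNReal.ofReal_le_ofReal hω
  calc μ {ω | t ≤ (Bc ω : ℝ)} ≤ μ {ω | ENNReal.ofReal t ≤ ((Bc ω : ℕ) : ℝ≥0∞)} := measure_mono hsub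
    _ ≤ (∫⁻ ω, ((Bc ω : ℕ) : ℝ≥0∞) ∂μ) / ENNReal.ofReal t := by
        apply meas_ge_le_lintegral_div (meas_fn _).aemeasurable
        · exact (ENNReal.ofReal_pos.mpr ht).ne'
        · exact ENNReal.ofReal_ne_top
    _ ≤ _ := ENNReal.div_le_div_right hlin _

end Bad

/-- **Ricci curvature of random bipartite graphs, intermediate regime.** If
`n pₙ → ∞` and `n pₙ² → 0`, then `κ_n(a,b) → −2` in probability. -/
theorem kappa_random_bipartite_neg_two (p : ℕ → ℝ) (hp : ∀ n, p n ∈ Set.Icc (0 : ℝ) 1)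
    (h1 : Tendsto (fun n : ℕ => ((n : ℝ) + 1) * p n) atTop atTop)
    (h2 : Tendsto (fun n : ℕ => ((n : ℝ) + 1) * (p n) ^ 2) atTop (nhds 0)) :
    ∀ ε > (0 : ℝ),
      Tendsto (fun n : ℕ =>
          bipMeasure (n+1) (ENNReal.ofReal (p n)) (ENNReal.ofReal_le_one.mpr (hp n).2)
            {ω | ε ≤ |kappaRand n ω - (-2)|})
        atTop (nhds 0) := by
  intro ε hε
  set a : ℕ → ℝ := fun n => (n : ℝ) * p n with haf
  have h1' : Tendsto a atTop atTop := by
    apply tendsto_atTop_mono ?_ (tendsto_atTop_add_const_right atTop (-1) h1)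
    intro n
    have h0 := (hp n).1
    have h1n := (hp n).2
    simp only [haf]
    nlinarith
  set B1 : ℕ → ℝ≥0∞ := fun n => ENNReal.ofReal (4 / a n) with hB1f
  set B3 : ℕ → ℝ≥0∞ := fun n => ENNReal.ofReal (16 * ((n : ℝ) + 1) * (p n) ^ 2 / ε) with hB3f
  have hB1 : Tendsto B1 atTop (nhds 0) := by
    have h : Tendsto (fun n => 4 / a n) atTop (nhds 0) :=
      Tendsto.div_atTop tendsto_const_nhds h1'
    simpa using ENNReal.tendsto_ofReal h
  have hB3 : Tendsto B3 atTop (nhds 0) := by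
    have h : Tendsto (fun n : ℕ => 16 * ((n : ℝ) + 1) * (p n) ^ 2 / ε) atTop (nhds 0) := by
      have h := h2.const_mul (16 / ε)
      rw [mul_zero] at h
      apply h.congr
      intro n
      field_simp
    simpa using ENNReal.tendsto_ofReal h
  apply tendsto_of_tendsto_of_tendsto_of_le_of_le' tendsto_const_nhds
    (show Tendsto (fun n => B1 n + B1 n + B3 n) atTop (nhds 0) by
      simpa using (hB1.add hB1).add hB3)
    (Filter.Eventually.of_forall fun n => zero_le)
  filter_upwards [h1'.eventually_ge_atTop (32 / ε)] with n hn
  set r : ℝ := p n with hrdef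
  have hr0 : 0 ≤ r := (hp n).1
  have hr1 : r ≤ 1 := (hp n).2
  set μ := bipMeasure (n+1) (ENNReal.ofReal r) (ENNReal.ofReal_le_one.mpr hr1) with hμ
  have ha0 : 0 < a n := lt_of_lt_of_le (by positivity) hn
  have hp0 : 0 < r := by
    rcases lt_or_ge 0 r with h | h
    · exact h
    · exfalso
      have : a n ≤ 0 := mul_nonpos_of_nonneg_of_nonpos (Nat.cast_nonneg n) h
      linarith
  have hn0 : (0 : ℝ) < n := by
    rcases lt_or_ge 0 ((n : ℝ)) with h | h
    · exact h
    · exfalso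
      have : a n ≤ 0 := mul_nonpos_of_nonpos_of_nonneg h hr0
      linarith
  have haε : 32 ≤ a n * ε := (div_le_iff₀ hε).mp hn
  set F : Finset (Fin (n+1)) := Finset.univ.filter (fun j : Fin (n+1) => j ≠ 0) with hF
  have hFcard : (F.card : ℝ) = n := by
    have : F = Finset.univ.erase 0 := by
      ext j; simp [hF, Finset.mem_erase]
    rw [this, Finset.card_erase_of_mem (Finset.mem_univ _)]
    simp
  have hXcF : ∀ ω, Xc ω = (F.filter (fun j => ω ((0 : Fin (n+1)), j) = true)).card := by
    intro ω
    rw [Xc, hF, Finset.filter_filter]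
  have hYcF : ∀ ω, Yc ω = (F.filter (fun i => ω (i, (0 : Fin (n+1))) = true)).card := by
    intro ω
    rw [Yc, hF, Finset.filter_filter]
  set S1 : Set (Fin (n+1) × Fin (n+1) → Bool) :=
    {ω | ((F.filter (fun j => ω ((0 : Fin (n+1)), j) = true)).card : ℝ) ≤ (F.card : ℝ) * r / 2}
    with hS1
  set S2 : Set (Fin (n+1) × Fin (n+1) → Bool) :=
    {ω | ((F.filter (fun i => ω (i, (0 : Fin (n+1))) = true)).card : ℝ) ≤ (F.card : ℝ) * r / 2}
    with hS2
  set S3 : Set (Fin (n+1) × Fin (n+1) → Bool) := {ω | ε * a n / 16 ≤ (Bc ω : ℝ)} with hS3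
  have hsub : {ω | ε ≤ |kappaRand n ω - (-2)|} ⊆ S1 ∪ S2 ∪ S3 := by
    intro ω hω
    simp only [Set.mem_setOf_eq, sub_neg_eq_add] at hω
    by_contra hc
    simp only [Set.mem_union, not_or, hS1, hS2, hS3, Set.mem_setOf_eq, not_le] at hc
    obtain ⟨⟨hc1, hc2⟩, hc3⟩ := hc
    rw [← hXcF, hFcard] at hc1
    rw [← hYcF, hFcard] at hc2
    have hkb := kappa_bound ω
    have hXd : (0 : ℝ) < (Xc ω : ℝ) + 1 := by positivity
    have hYd : (0 : ℝ) < (Yc ω : ℝ) + 1 := by positivity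
    have hX1 : a n / 2 < (Xc ω : ℝ) + 1 := by
      rw [show a n = (n : ℝ) * r from rfl]
      linarith
    have hY1 : a n / 2 < (Yc ω : ℝ) + 1 := by
      rw [show a n = (n : ℝ) * r from rfl]
      linarith
    have e1 : 2 / ((Xc ω : ℝ) + 1) ≤ ε / 8 := by
      rw [div_le_iff₀ hXd]
      have hm : ε / 8 * (a n / 2) ≤ ε / 8 * ((Xc ω : ℝ) + 1) :=
        mul_le_mul_of_nonneg_left hX1.le (by positivity)
      nlinarith
    have e2 : (2 + 2 * (Bc ω : ℝ)) / ((Yc ω : ℝ) + 1) ≤ 3 * ε / 8 := by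
      rw [div_le_iff₀ hYd]
      have hm : 3 * ε / 8 * (a n / 2) ≤ 3 * ε / 8 * ((Yc ω : ℝ) + 1) :=
        mul_le_mul_of_nonneg_left hY1.le (by positivity)
      nlinarith
    linarith
  have key : μ {ω | ε ≤ |kappaRand n ω - (-2)|} ≤ B1 n + B1 n + B3 n := by
    have hsplit : μ {ω | ε ≤ |kappaRand n ω - (-2)|} ≤ μ S1 + μ S2 + μ S3 :=
      (measure_mono hsub).trans ((measure_union_le _ _).trans
        (add_le_add (measure_union_le _ _) le_rfl))
    have hb1 : μ S1 ≤ B1 n := by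
      have hch := cheb hr0 hr1 F (fun j => ((0 : Fin (n+1)), j))
        (fun j₁ j₂ h => congrArg Prod.snd h) (by rw [hFcard]; exact ha0)
      refine hch.trans ?_
      rw [hFcard, ← ENNReal.ofReal_div_of_pos (by positivity), hB1f]
      apply ENNReal.ofReal_le_ofReal
      rw [show (n : ℝ) * r = a n from rfl]
      rw [show a n / ((a n / 2) ^ 2) = 4 / a n by
        rw [div_eq_div_iff (by positivity) (by positivity)]; ring]
    have hb2 : μ S2 ≤ B1 n := by
      have hch := cheb hr0 hr1 F (fun i => (i, (0 : Fin (n+1))))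
        (fun i₁ i₂ h => congrArg Prod.fst h) (by rw [hFcard]; exact ha0)
      refine hch.trans ?_
      rw [hFcard, ← ENNReal.ofReal_div_of_pos (by positivity), hB1f]
      apply ENNReal.ofReal_le_ofReal
      rw [show (n : ℝ) * r = a n from rfl]
      rw [show a n / ((a n / 2) ^ 2) = 4 / a n by
        rw [div_eq_div_iff (by positivity) (by positivity)]; ring]
    have hb3 : μ S3 ≤ B3 n := by
      have hbd := bad_measure (n := n) hr0 hr1 (t := ε * a n / 16) (by positivity)
      refine hbd.trans ?_
      have hnum : ((n : ℝ≥0∞) + 1) * (n : ℝ≥0∞) * (ENNReal.ofReal r) ^ 3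
          = ENNReal.ofReal (((n : ℝ) + 1) * (n : ℝ) * r ^ 3) := by
        rw [ENNReal.ofReal_mul (by positivity), ENNReal.ofReal_mul (by positivity),
          ENNReal.ofReal_pow hr0]
        congr 1
        congr 1
        · rw [ENNReal.ofReal_add (by positivity) zero_le_one]
          simp
        · simp
      rw [hnum, ← ENNReal.ofReal_div_of_pos (by positivity), hB3f]
      apply ENNReal.ofReal_le_ofReal
      have heq : ((n : ℝ) + 1) * (n : ℝ) * r ^ 3 / (ε * a n / 16)
          = 16 * ((n : ℝ) + 1) * r ^ 2 / ε := by
        rw [show a n = (n : ℝ) * r from rfl]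
        field_simp
      rw [heq]
    exact hsplit.trans (add_le_add (add_le_add hb1 hb2) hb3)
  exact key
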